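/- arXiv:2007.02377 — 4 statements merged into one kernel-verified Lean document; each statement's English description precedes it below -/
import Mathlib

section
/- In the graph G, every minimum-cost bisection S (i.e., every S with w(S)=w(V∖S)=12n minimizing cost(S) among all bisections) has the property that its cut contains exactly one edge from each of the paths P_A, P_B, P_C, and contains none of the edges e_A, e_B, e_C. -/
/-!
A bisection has to separate `u` (weight `10n`) from `v` (weight `11n`), so it cuts each of the
three `u`–`v` paths `P_A`, `P_B`, `P_C` at least once. The bisection
`{u, A_i, B_i (i ≥ 1), C_0, C_1}` (0-indexed) cuts one edge per path, at cost below `3β + 3T`.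
Every edge costs at least `β ≥ 3T`, so a minimum bisection cuts at most three edges, hence exactly
one per path; a special edge alone costs more than `3β + 3T`, so none of them is cut.
-/

open Finset

namespace SCLB

inductive V (n : ℕ) : Type
  | u : V n
  | v : V n
  | A : Fin n → V n
  | B : Fin n → V n
  | C : Fin n → V n
  deriving DecidableEq, Fintype

/-- Edges: `(p, some i)` is the `i`-th edge (0-indexed) on path `p` (`p = 0,1,2` for
`P_A, P_B, P_C`), joining the `(i+1)`-st path vertex to the next one; `(p, none)` is the
special edge `e_A`, `e_B`, `e_C` respectively. -/
abbrev E (n : ℕ) := Fin 3 × Option (Fin n)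

def Tsum (n : ℕ) (a b c : Fin n → ℕ) : ℕ := ∑ i, (a i + b i + c i)

def beta (n : ℕ) (a b c : Fin n → ℕ) : ℕ := 4 * Tsum n a b c * n ^ 2

def firstV {n : ℕ} (f : Fin n → V n) (dflt : V n) : V n :=
  if h : 0 < n then f ⟨0, h⟩ else dflt

def nextV {n : ℕ} (f : Fin n → V n) (top : V n) (i : Fin n) : V n :=
  if h : i.val + 1 < n then f ⟨i.val + 1, h⟩ else top

/-- The two endpoints of each edge. -/
def ends (n : ℕ) : E n → V n × V n
  | (p, none) =>
      if p = 0 then (V.v, firstV V.A V.u)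
      else if p = 1 then (V.v, firstV V.B V.u)
      else (V.u, firstV V.C V.v)
  | (p, some i) =>
      if p = 0 then (V.A i, nextV V.A V.u i)
      else if p = 1 then (V.B i, nextV V.B V.u i)
      else (V.C i, nextV V.C V.v i)

/-- Edge costs. -/
def ecost (n : ℕ) (a b c : Fin n → ℕ) : E n → ℚ
  | (_, none) => 1210 * (n : ℚ) ^ 2 * (2 * (beta n a b c : ℚ) + (Tsum n a b c : ℚ))
  | (p, some i) =>
      if p = 0 then (beta n a b c : ℚ) + (a i : ℚ)
      else if p = 1 then (beta n a b c : ℚ) + (b i : ℚ)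
      else (beta n a b c : ℚ) + (Tsum n a b c : ℚ) - (c i : ℚ)

/-- Vertex weights. -/
def wt (n : ℕ) : V n → ℚ
  | V.u => 10 * n
  | V.v => 11 * n
  | _ => 1

/-- The cut of `S`: edges with exactly one endpoint in `S`. -/
def cut (n : ℕ) (S : Finset (V n)) : Finset (E n) :=
  Finset.univ.filter fun e => ¬(((ends n e).1 ∈ S) ↔ ((ends n e).2 ∈ S))

def cutCost (n : ℕ) (a b c : Fin n → ℕ) (S : Finset (V n)) : ℚ :=
  ∑ e ∈ cut n S, ecost n a b c e

def wOf (n : ℕ) (S : Finset (V n)) : ℚ := ∑ x ∈ S, wt n x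

def quotientVal (n : ℕ) (a b c : Fin n → ℕ) (S : Finset (V n)) : ℚ :=
  cutCost n a b c S / min (wOf n S) (wOf n Sᶜ)

def sparsity (n : ℕ) (a b c : Fin n → ℕ) (S : Finset (V n)) : ℚ :=
  cutCost n a b c S / (wOf n S * wOf n Sᶜ)

def IsBisection (n : ℕ) (S : Finset (V n)) : Prop :=
  wOf n S = 12 * n ∧ wOf n Sᶜ = 12 * n

def PA (n : ℕ) : Finset (E n) := Finset.univ.filter fun e => e.1 = 0
def PB (n : ℕ) : Finset (E n) := Finset.univ.filter fun e => e.1 = 1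
def PC (n : ℕ) : Finset (E n) := Finset.univ.filter fun e => e.1 = 2

lemma exists_lt_not_iff_succ {P : ℕ → Prop} {m : ℕ} (h : ¬(P 0 ↔ P m)) :
    ∃ k < m, ¬(P k ↔ P (k + 1)) := by
  by_contra! hall
  have hconst : ∀ k ≤ m, (P 0 ↔ P k) := by
    intro k hk
    induction k with
    | zero => rfl
    | succ k ih => exact (ih (by omega)).trans (hall k (by omega))
  exact h (hconst m le_rfl)

variable {n : ℕ}

def V.equivSum (n : ℕ) : V n ≃ Unit ⊕ Unit ⊕ Fin n ⊕ Fin n ⊕ Fin n where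
  toFun
    | V.u => Sum.inl ()
    | V.v => Sum.inr (Sum.inl ())
    | V.A i => Sum.inr (Sum.inr (Sum.inl i))
    | V.B i => Sum.inr (Sum.inr (Sum.inr (Sum.inl i)))
    | V.C i => Sum.inr (Sum.inr (Sum.inr (Sum.inr i)))
  invFun
    | Sum.inl () => V.u
    | Sum.inr (Sum.inl ()) => V.v
    | Sum.inr (Sum.inr (Sum.inl i)) => V.A i
    | Sum.inr (Sum.inr (Sum.inr (Sum.inl i))) => V.B i
    | Sum.inr (Sum.inr (Sum.inr (Sum.inr i))) => V.C i
  left_inv x := by cases x <;> rfl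
  right_inv y := by rcases y with _ | _ | _ | _ | _ <;> rfl

lemma V.sum_univ {M : Type*} [AddCommMonoid M] (f : V n → M) :
    ∑ x, f x = f V.u + f V.v + ∑ i, f (V.A i) + ∑ i, f (V.B i) + ∑ i, f (V.C i) := by
  rw [← Equiv.sum_comp (V.equivSum n).symm f]
  simp [Fintype.sum_sum_type, V.equivSum, add_assoc]

lemma wt_nonneg (x : V n) : 0 ≤ wt n x := by
  cases x <;> simp [wt]

lemma wOf_univ : wOf n univ = 24 * n := by
  rw [wOf, V.sum_univ]
  simp [wt]
  ring

lemma wOf_compl (S : Finset (V n)) : wOf n Sᶜ = 24 * n - wOf n S := by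
  rw [eq_sub_iff_add_eq', ← wOf_univ]
  exact sum_add_sum_compl S (wt n)

lemma wOf_ge_of_mem {S : Finset (V n)} (hu : V.u ∈ S) (hv : V.v ∈ S) :
    21 * (n : ℚ) ≤ wOf n S :=
  calc 21 * (n : ℚ) = wOf n {V.u, V.v} := by simp [wOf, wt]; ring
    _ ≤ wOf n S := sum_le_sum_of_subset_of_nonneg (by simp [insert_subset_iff, hu, hv])
        fun x _ _ => wt_nonneg x

lemma IsBisection.separates_u_v (hn : 0 < n) {S : Finset (V n)} (hS : IsBisection n S) :
    ¬(V.u ∈ S ↔ V.v ∈ S) := by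
  have hn : (0 : ℚ) < n := by exact_mod_cast hn
  intro huv
  by_cases hu : V.u ∈ S
  · linarith [wOf_ge_of_mem hu (huv.1 hu), hS.1]
  · have hv : V.v ∉ S := fun hv => hu (huv.2 hv)
    linarith [wOf_ge_of_mem (mem_compl.2 hu) (mem_compl.2 hv), hS.2]

def chainVert (first : V n) (mid : Fin n → V n) (last : V n) (k : ℕ) : V n :=
  if k = 0 then first else if h : k - 1 < n then mid ⟨k - 1, h⟩ else last

def pathVert : Fin 3 → ℕ → V n
  | 0 => chainVert V.v V.A V.u
  | 1 => chainVert V.v V.B V.u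
  | 2 => chainVert V.u V.C V.v

def edgeIdx : Option (Fin n) → ℕ
  | none => 0
  | some i => i + 1

lemma ends_eq (hn : 0 < n) (e : E n) :
    ends n e = (pathVert e.1 (edgeIdx e.2), pathVert e.1 (edgeIdx e.2 + 1)) := by
  rcases e with ⟨p, _ | i⟩ <;> fin_cases p <;>
    simp [ends, pathVert, chainVert, firstV, nextV, edgeIdx, hn]

lemma mem_cut_iff (hn : 0 < n) {S : Finset (V n)} {e : E n} :
    e ∈ cut n S ↔ ¬(pathVert e.1 (edgeIdx e.2) ∈ S ↔ pathVert e.1 (edgeIdx e.2 + 1) ∈ S) := by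
  simp [cut, ends_eq hn]

lemma pathVert_zero_not_iff_last {S : Finset (V n)} (hS : ¬(V.u ∈ S ↔ V.v ∈ S)) (p : Fin 3) :
    ¬(pathVert p 0 ∈ S ↔ pathVert p (n + 1) ∈ S) := by
  fin_cases p <;> simp [pathVert, chainVert] <;> tauto

lemma exists_mem_cut_fst_eq (hn : 0 < n) {S : Finset (V n)} (hS : ¬(V.u ∈ S ↔ V.v ∈ S))
    (p : Fin 3) : ∃ e ∈ cut n S, e.1 = p := by
  obtain ⟨k, hk, hcross⟩ :=
    exists_lt_not_iff_succ (P := (pathVert p · ∈ S)) (pathVert_zero_not_iff_last hS p)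
  obtain ⟨o, rfl⟩ : ∃ o : Option (Fin n), edgeIdx o = k := by
    rcases k with _ | k
    · exact ⟨none, rfl⟩
    · exact ⟨some ⟨k, by omega⟩, rfl⟩
  exact ⟨(p, o), (mem_cut_iff hn).2 hcross, rfl⟩

def cheapSide : V n → Bool
  | V.u => true
  | V.v => false
  | V.A i => 0 < i.val
  | V.B i => 0 < i.val
  | V.C i => i.val < 2

def cheapBisection (n : ℕ) : Finset (V n) := univ.filter fun x => cheapSide x

lemma isBisection_cheapBisection (hn : 1 < n) : IsBisection n (cheapBisection n) := by
  have hS : wOf n (cheapBisection n) = 12 * n := by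
    obtain ⟨m, rfl⟩ : ∃ m, n = m + 2 := ⟨n - 2, by omega⟩
    rw [wOf, cheapBisection, sum_filter, V.sum_univ]
    simp only [cheapSide, wt, Fin.sum_univ_succ]
    simp
    ring
  exact ⟨hS, by rw [wOf_compl, hS]; ring⟩

lemma cut_cheapBisection (hn : 1 < n) :
    cut n (cheapBisection n) =
      {(0, some ⟨0, by omega⟩), (1, some ⟨0, by omega⟩), (2, some ⟨1, hn⟩)} := by
  ext e
  rw [mem_cut_iff (by omega)]
  rcases e with ⟨p, _ | ⟨i, hi⟩⟩ <;> fin_cases p <;>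
    simp [pathVert, chainVert, cheapBisection, cheapSide, edgeIdx, show 0 < n by omega] <;>
    split_ifs <;> simp <;> omega

section Costs

variable (a b c : Fin n → ℕ)

lemma add_add_le_Tsum (i : Fin n) : a i + b i + c i ≤ Tsum n a b c :=
  single_le_sum (f := fun j => a j + b j + c j) (fun _ _ => Nat.zero_le _) (mem_univ i)

lemma three_mul_Tsum_le_beta (hn : 0 < n) : 3 * (Tsum n a b c : ℚ) ≤ beta n a b c := by
  have hn2 : (1 : ℚ) ≤ (n : ℚ) ^ 2 := by exact_mod_cast Nat.one_le_pow _ _ hn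
  push_cast [beta]
  nlinarith [(Tsum n a b c).cast_nonneg (α := ℚ)]

lemma beta_le_ecost (e : E n) : (beta n a b c : ℚ) ≤ ecost n a b c e := by
  have hbeta : (beta n a b c : ℚ) = 4 * Tsum n a b c * (n : ℚ) ^ 2 := by push_cast [beta]; rfl
  rcases e with ⟨p, _ | i⟩
  · simp only [ecost]
    nlinarith [(Tsum n a b c).cast_nonneg (α := ℚ), sq_nonneg (n : ℚ),
      mul_nonneg (sq_nonneg (n : ℚ)) ((Tsum n a b c).cast_nonneg (α := ℚ))]
  · have hc : (c i : ℚ) ≤ Tsum n a b c := by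
      exact_mod_cast (add_add_le_Tsum a b c i).trans' (Nat.le_add_left _ _)
    simp only [ecost]
    split_ifs <;> linarith [(a i).cast_nonneg (α := ℚ), (b i).cast_nonneg (α := ℚ)]

lemma three_mul_add_le_ecost_none (hn : 0 < n) (p : Fin 3) :
    3 * (beta n a b c : ℚ) + 3 * Tsum n a b c ≤ ecost n a b c (p, none) := by
  have hn2 : (1 : ℚ) ≤ (n : ℚ) ^ 2 := by exact_mod_cast Nat.one_le_pow _ _ hn
  calc 3 * (beta n a b c : ℚ) + 3 * Tsum n a b c
      ≤ 1 * (1210 * (2 * beta n a b c + Tsum n a b c)) := by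
        linarith [(beta n a b c).cast_nonneg (α := ℚ), (Tsum n a b c).cast_nonneg (α := ℚ)]
    _ ≤ (n : ℚ) ^ 2 * (1210 * (2 * beta n a b c + Tsum n a b c)) :=
        mul_le_mul_of_nonneg_right hn2 (by positivity)
    _ = ecost n a b c (p, none) := by rw [ecost]; ring

lemma beta_mul_card_cut_le (S : Finset (V n)) :
    (beta n a b c : ℚ) * #(cut n S) ≤ cutCost n a b c S := by
  rw [mul_comm, ← nsmul_eq_mul, ← sum_const]
  exact sum_le_sum fun e _ => beta_le_ecost a b c e

lemma ecost_le_cutCost {S : Finset (V n)} {e : E n} (he : e ∈ cut n S) :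
    ecost n a b c e ≤ cutCost n a b c S :=
  single_le_sum (fun f _ => (beta_le_ecost a b c f).trans' (Nat.cast_nonneg _)) he

lemma cutCost_cheapBisection_lt (hn : 1 < n) (hc : ∀ i, 0 < c i) :
    cutCost n a b c (cheapBisection n) < 3 * beta n a b c + 3 * Tsum n a b c := by
  have h0 : 0 < n := by omega
  rw [cutCost, cut_cheapBisection hn, sum_insert (by simp), sum_insert (by simp), sum_singleton]
  have hab : (a ⟨0, h0⟩ : ℚ) + b ⟨0, h0⟩ ≤ Tsum n a b c := by
    exact_mod_cast (add_add_le_Tsum a b c _).trans' (Nat.le_add_right _ _)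
  have hc : (0 : ℚ) < c ⟨1, hn⟩ := by exact_mod_cast hc _
  simp [ecost]
  linarith

variable {a b c} {S : Finset (V n)}

lemma mk_none_notMem_cut_of_cutCost_lt (hn : 0 < n)
    (hS : cutCost n a b c S < 3 * beta n a b c + 3 * Tsum n a b c) (p : Fin 3) :
    (p, none) ∉ cut n S := fun he =>
  ((three_mul_add_le_ecost_none a b c hn p).trans (ecost_le_cutCost a b c he)).not_gt hS

lemma card_cut_le_three_of_cutCost_lt (hn : 0 < n)
    (hS : cutCost n a b c S < 3 * beta n a b c + 3 * Tsum n a b c) : #(cut n S) ≤ 3 := by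
  by_contra! h4
  have h4 : (4 : ℚ) ≤ #(cut n S) := by exact_mod_cast h4
  nlinarith [beta_mul_card_cut_le a b c S, three_mul_Tsum_le_beta a b c hn,
    (beta n a b c).cast_nonneg (α := ℚ)]

end Costs

lemma card_filter_fst_eq_one {α : Type*} {s : Finset (Fin 3 × α)} (hs : #s ≤ 3)
    (hfiber : ∀ p, ∃ e ∈ s, e.1 = p) (p : Fin 3) : #{e ∈ s | e.1 = p} = 1 := by
  have hpos (q : Fin 3) : 1 ≤ #{e ∈ s | e.1 = q} := by
    obtain ⟨e, he, rfl⟩ := hfiber q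
    exact card_pos.2 ⟨e, mem_filter.2 ⟨he, rfl⟩⟩
  have hsum := card_eq_sum_card_fiberwise (f := Prod.fst) (t := univ) (s := s) (by simp)
  rw [Fin.sum_univ_three] at hsum
  have := hpos 0; have := hpos 1; have := hpos 2
  fin_cases p <;> simp only [Fin.zero_eta, Fin.mk_one, Fin.reduceFinMk] <;> omega

theorem minimum_bisection_structure_general (n : ℕ) (hn : 1 < n) (a b c : Fin n → ℕ)
    (hc : ∀ i, 0 < c i)
    (S : Finset (V n)) (hS : IsBisection n S)
    (hmin : ∀ S' : Finset (V n), IsBisection n S' →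
      cutCost n a b c S ≤ cutCost n a b c S') :
    ((cut n S ∩ PA n).card = 1 ∧ (cut n S ∩ PB n).card = 1 ∧ (cut n S ∩ PC n).card = 1)
    ∧ (((0 : Fin 3), (none : Option (Fin n))) ∉ cut n S
        ∧ ((1 : Fin 3), (none : Option (Fin n))) ∉ cut n S
        ∧ ((2 : Fin 3), (none : Option (Fin n))) ∉ cut n S) := by
  have h0 : 0 < n := by omega
  have hlt := (hmin _ (isBisection_cheapBisection hn)).trans_lt
    (cutCost_cheapBisection_lt a b c hn hc)
  have hspecial := mk_none_notMem_cut_of_cutCost_lt h0 hlt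
  have hcard := card_cut_le_three_of_cutCost_lt h0 hlt
  have hpath := exists_mem_cut_fst_eq h0 (hS.separates_u_v h0)
  simp only [PA, PB, PC, inter_filter, inter_univ]
  exact ⟨⟨card_filter_fst_eq_one hcard hpath 0, card_filter_fst_eq_one hcard hpath 1,
    card_filter_fst_eq_one hcard hpath 2⟩, hspecial 0, hspecial 1, hspecial 2⟩

/-- Every minimum-cost bisection cuts exactly one edge of each of `P_A, P_B, P_C` and
none of `e_A, e_B, e_C`. -/
theorem minimum_bisection_structure (n : ℕ) (hn : 1 < n) (a b c : Fin n → ℕ)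
    (ha : ∀ i, 0 < a i) (hb : ∀ i, 0 < b i) (hc : ∀ i, 0 < c i)
    (S : Finset (V n)) (hS : IsBisection n S)
    (hmin : ∀ S' : Finset (V n), IsBisection n S' →
      cutCost n a b c S ≤ cutCost n a b c S') :
    ((cut n S ∩ PA n).card = 1 ∧ (cut n S ∩ PB n).card = 1 ∧ (cut n S ∩ PC n).card = 1)
    ∧ (((0 : Fin 3), (none : Option (Fin n))) ∉ cut n S
        ∧ ((1 : Fin 3), (none : Option (Fin n))) ∉ cut n S
        ∧ ((2 : Fin 3), (none : Option (Fin n))) ∉ cut n S) :=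
  minimum_bisection_structure_general n hn a b c hc S hS hmin

end SCLB
end

section
/- Let i,j,k∈{1,…,n} and let S⊆V with ∅≠S⊊V be such that the cut of S is exactly the three edges (v_{a_i},v_{a_{i+1}}), (v_{b_j},v_{b_{j+1}}), (v_{c_k},v_{c_{k+1}}). Then, up to replacing S by its complement, S = {v} ∪ {v_{a_1},…,v_{a_i}} ∪ {v_{b_1},…,v_{b_j}} ∪ {v_{c_{k+1}},…,v_{c_n}} and V∖S = {u} ∪ {v_{a_{i+1}},…,v_{a_n}} ∪ {v_{b_{j+1}},…,v_{b_n}} ∪ {v_{c_1},…,v_{c_k}}. -/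
open Finset

namespace SCLB

def inSijk (n : ℕ) (i j k : Fin n) : V n → Bool
  | V.v => true
  | V.u => false
  | V.A t => decide (t.val ≤ i.val)
  | V.B t => decide (t.val ≤ j.val)
  | V.C t => decide (k.val < t.val)

/-- The set `S_{i,j,k} = {v} ∪ {v_{a_1},…,v_{a_i}} ∪ {v_{b_1},…,v_{b_j}} ∪
{v_{c_{k+1}},…,v_{c_n}}` (here `i, j, k : Fin n` are the 0-indexed versions of the paper's
1-indexed `i, j, k`). -/
def Sijk (n : ℕ) (i j k : Fin n) : Finset (V n) :=
  Finset.univ.filter fun x => inSijk n i j k x = true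

/-!
Each of the three paths `P_A`, `P_B`, `P_C` runs from `v`, `v`, `u` to `u`, `u`, `v` and
contains exactly one cut edge, so membership in `S` flips exactly once along it, at that edge.
Along `P_A` this puts `u` and `v` on opposite sides of the cut; then the side of every inner
path vertex is read off from its position relative to the cut edge of its path.
-/

theorem iff_zero_iff_le_of_flip_iff_eq {P : ℕ → Prop} {N k : ℕ}
    (hflip : ∀ m < N, ¬(P m ↔ P (m + 1)) ↔ m = k) :
    ∀ m ≤ N, ((P m ↔ P 0) ↔ m ≤ k) := by
  intro m
  induction m with
  | zero => simp
  | succ m ih =>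
    intro hm
    have hstep := hflip m (by omega)
    have ih' := ih (by omega)
    by_cases hmk : m = k
    · have : ¬(m + 1 ≤ k) := by omega
      have : m ≤ k := by omega
      tauto
    · have : m + 1 ≤ k ↔ m ≤ k := by omega
      tauto

theorem Finset.eq_or_eq_compl_of_forall_mem_iff {α : Type*} [Fintype α] [DecidableEq α]
    {S T : Finset α} {s : Prop} (h : ∀ x, x ∈ S ↔ (s ↔ x ∈ T)) : S = T ∨ S = Tᶜ := by
  by_cases hs : s
  · left; ext x; simp [h x, hs]
  · right; ext x; simp [h x, hs]

/-- The `m`-th vertex (`0 ≤ m ≤ n + 1`) of the path `P_A`, `P_B` or `P_C` for `p = 0, 1, 2`. -/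
def pathVertex (n : ℕ) (p : Fin 3) : ℕ → V n
  | 0 => ![V.v, V.v, V.u] p
  | m + 1 => if h : m < n then ![V.A, V.B, V.C] p ⟨m, h⟩ else ![V.u, V.u, V.v] p

/-- The `m`-th edge of the path `p`; only meaningful for `m ≤ n`. -/
def pathEdge (n : ℕ) (p : Fin 3) : ℕ → E n
  | 0 => (p, none)
  | m + 1 => (p, if h : m < n then some ⟨m, h⟩ else none)

theorem ends_pathEdge {n : ℕ} (p : Fin 3) {m : ℕ} (hm : m ≤ n) :
    ends n (pathEdge n p m) = (pathVertex n p m, pathVertex n p (m + 1)) := by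
  cases m with
  | zero =>
    fin_cases p <;> by_cases hn : 0 < n <;> simp [ends, pathEdge, pathVertex, firstV, hn]
  | succ m =>
    have hmn : m < n := by omega
    fin_cases p <;> by_cases h : m + 1 < n <;> simp [ends, pathEdge, pathVertex, nextV, hmn, h]

theorem pathEdge_eq_some_iff {n : ℕ} (p q : Fin 3) (t : Fin n) {m : ℕ} (hm : m ≤ n) :
    pathEdge n p m = (q, some t) ↔ p = q ∧ m = t + 1 := by
  cases m with
  | zero => simp [pathEdge]
  | succ m =>
    have hmn : m < n := by omega
    simp [pathEdge, hmn, Fin.ext_iff, eq_comm]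

def threePathEdges {n : ℕ} (i j k : Fin n) : Finset (E n) :=
  {((0 : Fin 3), some i), ((1 : Fin 3), some j), ((2 : Fin 3), some k)}

section ThreeEdgeCut

variable {n : ℕ} {i j k : Fin n} {S : Finset (V n)}

theorem mem_pathVertex_iff_le
    (hcut : cut n S = threePathEdges i j k)
    (p : Fin 3) {m : ℕ} (hm : m ≤ n + 1) :
    (pathVertex n p m ∈ S ↔ pathVertex n p 0 ∈ S) ↔ m ≤ (![i, j, k] p : ℕ) + 1 := by
  refine iff_zero_iff_le_of_flip_iff_eq (P := fun l => pathVertex n p l ∈ S) (N := n + 1)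
    (fun l hl => ?_) m hm
  have hln : l ≤ n := Nat.lt_succ_iff.mp hl
  have hcross : pathEdge n p l ∈ cut n S ↔
      ¬(pathVertex n p l ∈ S ↔ pathVertex n p (l + 1) ∈ S) := by
    simp [cut, ends_pathEdge p hln]
  rw [← hcross, hcut]
  fin_cases p <;> simp [threePathEdges, pathEdge_eq_some_iff _ _ _ hln]

theorem pathVertex_last_mem_not_iff
    (hcut : cut n S = threePathEdges i j k)
    (p : Fin 3) : ¬(pathVertex n p (n + 1) ∈ S ↔ pathVertex n p 0 ∈ S) := by
  rw [mem_pathVertex_iff_le hcut p le_rfl]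
  have := (![i, j, k] p).isLt
  omega

theorem mem_inner_pathVertex_iff_le
    (hcut : cut n S = threePathEdges i j k)
    (p : Fin 3) (t : Fin n) :
    (![V.A, V.B, V.C] p t ∈ S ↔ pathVertex n p 0 ∈ S) ↔ (t : ℕ) ≤ ![i, j, k] p := by
  simpa [pathVertex] using mem_pathVertex_iff_le hcut p (m := t + 1) (by omega)

theorem mem_Sijk_iff {x : V n} : x ∈ Sijk n i j k ↔ inSijk n i j k x := by
  simp [Sijk]

theorem mem_iff_iff_mem_Sijk
    (hcut : cut n S = threePathEdges i j k)
    (x : V n) : x ∈ S ↔ (V.v ∈ S ↔ x ∈ Sijk n i j k) := by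
  have hu : ¬(V.u ∈ S ↔ V.v ∈ S) := by
    simpa [pathVertex] using pathVertex_last_mem_not_iff hcut 0
  cases x <;> simp only [mem_Sijk_iff, inSijk, decide_eq_true_eq]
  case u => tauto
  case v => tauto
  case A t =>
    have h : (V.A t ∈ S ↔ V.v ∈ S) ↔ (t : ℕ) ≤ i := mem_inner_pathVertex_iff_le hcut 0 t
    tauto
  case B t =>
    have h : (V.B t ∈ S ↔ V.v ∈ S) ↔ (t : ℕ) ≤ j := mem_inner_pathVertex_iff_le hcut 1 t
    tauto
  case C t =>
    have h : (V.C t ∈ S ↔ V.u ∈ S) ↔ (t : ℕ) ≤ k := mem_inner_pathVertex_iff_le hcut 2 t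
    rw [← not_le]
    tauto

end ThreeEdgeCut

theorem cut_three_edges_determines_set_general (n : ℕ)
    (i j k : Fin n) (S : Finset (V n))
    (hcut : cut n S =
      {((0 : Fin 3), some i), ((1 : Fin 3), some j), ((2 : Fin 3), some k)}) :
    S = Sijk n i j k ∨ S = (Sijk n i j k)ᶜ :=
  Finset.eq_or_eq_compl_of_forall_mem_iff (mem_iff_iff_mem_Sijk hcut)

/-- If the cut of `S` is exactly the three edges `(v_{a_i},v_{a_{i+1}})`,
`(v_{b_j},v_{b_{j+1}})`, `(v_{c_k},v_{c_{k+1}})`, then `S` is `S_{i,j,k}` or its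
complement. -/
theorem cut_three_edges_determines_set (n : ℕ) (hn : 1 < n) (a b c : Fin n → ℕ)
    (ha : ∀ i, 0 < a i) (hb : ∀ i, 0 < b i) (hc : ∀ i, 0 < c i)
    (i j k : Fin n) (S : Finset (V n)) (hne : S.Nonempty) (hproper : S ≠ Finset.univ)
    (hcut : cut n S =
      {((0 : Fin 3), some i), ((1 : Fin 3), some j), ((2 : Fin 3), some k)}) :
    S = Sijk n i j k ∨ S = (Sijk n i j k)ᶜ :=
  cut_three_edges_determines_set_general n i j k S hcut

end SCLB
end

section
/- In the graph G, for every i∈{1,…,n} the weighted shortest-path distance between a_i and b_i equals (n+2)·M + A[i] + B[i]. -/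
/-!
The path `a i – ℓ – ℓ' – b i` has weight `(i+1)·M + A[i] + M + (n−i)·M + B[i]`. Conversely, the
distances from `a i`, written out explicitly, form a potential that grows by at most the weight
of each edge it crosses, so every walk from `a i` to `b i` weighs at least the difference of the
potential at its ends, which is the same number.
-/

open Finset

namespace DiamGadget

inductive V (n : ℕ) : Type
  | a : Fin n → V n
  | b : Fin n → V n
  | l : V n
  | r : V n
  | l' : V n
  | r' : V n
  deriving DecidableEq, Fintype

def M : ℕ := 4

/-- One-directional edge-weight table encoding the instance `(A, B)`; a value `0` means
"no edge in this direction".  Here `i : Fin n` is 0-indexed, so `a i` is the paper's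
`a_{i+1}`, whence the weights `(i+1)·M + A[i]` and `(n−i)·M + A[i]`. -/
def wt0 (n : ℕ) (A B : Fin n → Fin 2) : V n → V n → ℕ
  | V.l, V.l' => M
  | V.r, V.r' => M
  | V.a i, V.l => (i.val + 1) * M + (A i).val
  | V.a i, V.r => (n - i.val) * M + (A i).val
  | V.b i, V.l' => (n - i.val) * M + (B i).val
  | V.b i, V.r' => (i.val + 1) * M + (B i).val
  | _, _ => 0

/-- The symmetrized edge weight. -/
def wtE (n : ℕ) (A B : Fin n → Fin 2) (x y : V n) : ℕ :=
  wt0 n A B x y + wt0 n A B y x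

/-- The graph `G`: `x` and `y` are adjacent iff the weight table records an edge. -/
def G (n : ℕ) (A B : Fin n → Fin 2) : SimpleGraph (V n) :=
  SimpleGraph.fromRel fun x y => wt0 n A B x y ≠ 0

/-- The total weight of a walk. -/
def wWeight {n : ℕ} {A B : Fin n → Fin 2} {x y : V n} (p : (G n A B).Walk x y) : ℕ :=
  (p.darts.map fun d => wtE n A B d.toProd.1 d.toProd.2).sum

/-- The weighted shortest-path distance: the minimum over paths from `x` to `y` of the sum
of the edge weights along the path. -/
noncomputable def dist (n : ℕ) (A B : Fin n → Fin 2) (x y : V n) : ℕ :=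
  sInf {m | ∃ p : (G n A B).Walk x y, p.IsPath ∧ wWeight p = m}

/-- The weighted diameter: the maximum of `dist x y` over all pairs of vertices. -/
noncomputable def diam (n : ℕ) (A B : Fin n → Fin 2) : ℕ :=
  Finset.univ.sup fun p : V n × V n => dist n A B p.1 p.2
theorem le_add_sum_map_darts_of_adj_le {α : Type*} {H : SimpleGraph α} (w : α → α → ℕ)
    {φ : α → ℤ} (hφ : ∀ ⦃x y⦄, H.Adj x y → φ y ≤ φ x + w x y) {x y : α} (p : H.Walk x y) :
    φ y ≤ φ x + (p.darts.map fun d => w d.fst d.snd).sum := by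
  induction p with
  | nil => simp
  | cons h q ih =>
    simp only [SimpleGraph.Walk.darts_cons, List.map_cons, List.sum_cons, Nat.cast_add]
    linarith [hφ h]

section

variable {n : ℕ} {A B : Fin n → Fin 2}

theorem dist_le_wWeight {x y : V n} {p : (G n A B).Walk x y} (hp : p.IsPath) :
    dist n A B x y ≤ wWeight p :=
  Nat.sInf_le ⟨p, hp, rfl⟩

theorem dist_eq_wWeight_of_potential {φ : V n → ℤ}
    (hφ : ∀ ⦃x y⦄, (G n A B).Adj x y → φ y ≤ φ x + wtE n A B x y)
    {x y : V n} {p : (G n A B).Walk x y} (hp : p.IsPath) (htight : φ y = φ x + wWeight p) :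
    dist n A B x y = wWeight p := by
  refine le_antisymm (dist_le_wWeight hp) (le_csInf ⟨_, p, hp, rfl⟩ ?_)
  rintro _ ⟨q, -, rfl⟩
  have := le_add_sum_map_darts_of_adj_le (wtE n A B) hφ q
  rw [← wWeight] at this
  omega

-- The distances from `a i`: the two terms of each `min` are the routes through `ℓ` and through `r`.
def distFromA (A B : Fin n → Fin 2) (i : Fin n) : V n → ℤ
  | V.a j => if j = i then 0 else
      (min ((i.val : ℤ) + j.val + 2) (2 * n - i.val - j.val)) * M + (A i).val + (A j).val
  | V.l => ((i.val : ℤ) + 1) * M + (A i).val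
  | V.r => ((n : ℤ) - i.val) * M + (A i).val
  | V.l' => ((i.val : ℤ) + 2) * M + (A i).val
  | V.r' => ((n : ℤ) - i.val + 1) * M + (A i).val
  | V.b j => (min ((i.val : ℤ) + 2 + n - j.val) ((n : ℤ) - i.val + 2 + j.val)) * M
      + (A i).val + (B j).val

theorem distFromA_le_add_wtE (i : Fin n) ⦃x y : V n⦄ (h : (G n A B).Adj x y) :
    distFromA A B i y ≤ distFromA A B i x + wtE n A B x y := by
  rw [G, SimpleGraph.fromRel_adj] at h
  obtain ⟨-, hedge⟩ := h
  have hi := i.isLt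
  cases x <;> cases y <;> simp only [wt0, wtE, distFromA, M, min_def] at hedge ⊢ <;>
    (try split_ifs) <;> (try subst_vars) <;> omega

theorem adj_of_wt0_ne_zero {x y : V n} (hne : x ≠ y) (h : wt0 n A B x y ≠ 0) :
    (G n A B).Adj x y :=
  (SimpleGraph.fromRel_adj _ _ _).2 ⟨hne, Or.inl h⟩

def pathViaL (i : Fin n) : (G n A B).Walk (V.a i) (V.b i) :=
  have hal : (G n A B).Adj (V.a i) V.l := adj_of_wt0_ne_zero (by simp) (by simp [wt0, M])
  have hll' : (G n A B).Adj V.l V.l' := adj_of_wt0_ne_zero (by simp) (by simp [wt0, M])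
  have hbl' : (G n A B).Adj (V.b i) V.l' :=
    adj_of_wt0_ne_zero (by simp) (by simp [wt0, M]; omega)
  .cons hal <| .cons hll' <| .cons hbl'.symm .nil

theorem isPath_pathViaL (i : Fin n) : (pathViaL (A := A) (B := B) i).IsPath := by
  simp [pathViaL, SimpleGraph.Walk.isPath_def]

theorem wWeight_pathViaL (i : Fin n) :
    wWeight (pathViaL (A := A) (B := B) i) = (n + 2) * M + (A i).val + (B i).val := by
  simp only [wWeight, pathViaL, SimpleGraph.Walk.darts_cons, SimpleGraph.Walk.darts_nil,
    List.map_cons, List.map_nil, List.sum_cons, List.sum_nil, wtE, wt0, M]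
  omega

end

theorem dist_ai_bi_general (n : ℕ) (A B : Fin n → Fin 2) (i : Fin n) :
    dist n A B (V.a i) (V.b i) = (n + 2) * M + (A i).val + (B i).val := by
  rw [← wWeight_pathViaL i]
  refine dist_eq_wWeight_of_potential (distFromA_le_add_wtE i) (isPath_pathViaL i) ?_
  rw [wWeight_pathViaL]
  simp only [distFromA, ↓reduceIte, min_def, M]
  omega

/-- For every coordinate `i`, the weighted distance between `a_i` and `b_i` is exactly
`(n+2)·M + A[i] + B[i]`. -/
theorem dist_ai_bi (n : ℕ) (hn : 1 ≤ n) (A B : Fin n → Fin 2) (i : Fin n) :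
    dist n A B (V.a i) (V.b i) = (n + 2) * M + (A i).val + (B i).val :=
  dist_ai_bi_general n A B i

end DiamGadget
end

section
/- In the graph G, for all a≠b in {1,…,n} and all vertices x∈S_a, y∈S_b, the weighted shortest-path distance is realized by a two-edge path through ℓ or through r: d(x,y) = min( w(x,ℓ)+w(ℓ,y), w(x,r)+w(r,y) ). -/
open Finset

namespace OVGadget

inductive V (n d : ℕ) : Type
  | U : Fin n → Fin d → V n d
  | U' : Fin n → Fin d → V n d
  | l : V n d
  | r : V n d
  deriving DecidableEq, Fintype

def M : ℕ := 4

/-- One-directional edge-weight table encoding the vectors `v_1, …, v_n`; a value `0` means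
"no edge".  Here `j : Fin d` is 0-indexed, so `U k j` is the paper's `u_{k+1, j+1}`, whence
the weights `(j+1)·M + v_k[j]` and `(2d+1−(j+1))·M + v_k[j] = (2d−j)·M + v_k[j]`. -/
def wt0 (n d : ℕ) (v : Fin n → Fin d → Fin 2) : V n d → V n d → ℕ
  | V.U k j, V.l => (j.val + 1) * M + (v k j).val
  | V.U' k j, V.l => (2 * d - j.val) * M + (v k j).val
  | V.U k j, V.r => (2 * d - j.val) * M + (v k j).val
  | V.U' k j, V.r => (j.val + 1) * M + (v k j).val
  | _, _ => 0

/-- The symmetrized edge weight. -/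
def wtE (n d : ℕ) (v : Fin n → Fin d → Fin 2) (x y : V n d) : ℕ :=
  wt0 n d v x y + wt0 n d v y x

/-- The graph `G`: `x` and `y` are adjacent iff the weight table records an edge. -/
def G (n d : ℕ) (v : Fin n → Fin d → Fin 2) : SimpleGraph (V n d) :=
  SimpleGraph.fromRel fun x y => wt0 n d v x y ≠ 0

/-- The total weight of a walk. -/
def wWeight {n d : ℕ} {v : Fin n → Fin d → Fin 2} {x y : V n d}
    (p : (G n d v).Walk x y) : ℕ :=
  (p.darts.map fun e => wtE n d v e.toProd.1 e.toProd.2).sum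

/-- The weighted shortest-path distance: the minimum over paths from `x` to `y` of the sum
of the edge weights along the path. -/
noncomputable def dist (n d : ℕ) (v : Fin n → Fin d → Fin 2) (x y : V n d) : ℕ :=
  sInf {m | ∃ p : (G n d v).Walk x y, p.IsPath ∧ wWeight p = m}

/-- Membership in the set `S_k = {u_{k,j}, u'_{k,j} : j}`. -/
def inS (n d : ℕ) (k : Fin n) (x : V n d) : Prop :=
  (∃ j : Fin d, x = V.U k j) ∨ (∃ j : Fin d, x = V.U' k j)

/-- The set `S_k` as a finite set of vertices. -/
def SF (n d : ℕ) (k : Fin n) : Finset (V n d) :=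
  (Finset.univ.image fun j : Fin d => V.U k j)
    ∪ (Finset.univ.image fun j : Fin d => V.U' k j)

/-- `Max-Dist(S_a, S_b) = max_{x ∈ S_a, y ∈ S_b} d(x, y)`. -/
noncomputable def maxDist (n d : ℕ) (v : Fin n → Fin d → Fin 2) (a b : Fin n) : ℕ :=
  (SF n d a ×ˢ SF n d b).sup fun p => dist n d v p.1 p.2

end OVGadget

/-! Every edge joins a hub `ℓ` or `r` to a spoke `u_{k,j}` or `u'_{k,j}`. The two hub edges at
a spoke weigh `(2d+1)·M + 2 v_k[j] ≥ 8d + 4` together, while each of them weighs at most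
`8d + 1`, so crossing from one hub to the other through a spoke never pays off. Hence the
two-edge distance to `y`, suitably extended to the hubs, drops by at most the edge weight along
every edge, and such a potential bounds the weight of every walk to `y` from below. -/

theorem SimpleGraph.Walk.le_sum_darts_add_of_potential {V R : Type*} [AddCommMonoid R]
    [PartialOrder R] [IsOrderedAddMonoid R] {G : SimpleGraph V} (w : V → V → R) (φ : V → R)
    (hφ : ∀ a b, G.Adj a b → φ a ≤ w a b + φ b) {x y : V} (p : G.Walk x y) :
    φ x ≤ (p.darts.map fun e => w e.fst e.snd).sum + φ y := by
  induction p with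
  | nil => simp
  | @cons a b c hab p ih =>
    calc φ a ≤ w a b + φ b := hφ a b hab
      _ ≤ w a b + ((p.darts.map fun e => w e.fst e.snd).sum + φ c) := by gcongr
      _ = _ := by simp [add_assoc]

namespace OVGadget

variable {n d : ℕ} {v : Fin n → Fin d → Fin 2}

def V.IsHub (x : V n d) : Prop := x = .l ∨ x = .r

lemma inS.not_isHub {k : Fin n} {x : V n d} (hx : inS n d k x) : ¬ x.IsHub := by
  rcases hx with ⟨j, rfl⟩ | ⟨j, rfl⟩ <;> simp [V.IsHub]

lemma G_adj_iff {a b : V n d} : (G n d v).Adj a b ↔ (a.IsHub ↔ ¬ b.IsHub) := by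
  cases a <;> cases b <;> simp [G, wt0, M, V.IsHub] <;> omega

lemma wtE_comm (x y : V n d) : wtE n d v x y = wtE n d v y x :=
  Nat.add_comm _ _

lemma wtE_le {z h : V n d} (hz : ¬ z.IsHub) (hh : h.IsHub) : wtE n d v z h ≤ 8 * d + 1 := by
  rcases hh with rfl | rfl <;> cases z <;> simp_all [V.IsHub, wtE, wt0, M] <;>
    rename_i k j <;> have := (v k j).isLt <;> omega

lemma wtE_l_add_wtE_r {z : V n d} (hz : ¬ z.IsHub) :
    8 * d + 4 ≤ wtE n d v z .l + wtE n d v z .r := by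
  cases z <;> simp_all [V.IsHub, wtE, wt0, M] <;> omega

/-- A lower bound for the distance to the spoke `y`, exact at the other spokes. From a hub, any
route other than the direct edge passes through a spoke to the other hub, at a cost of at least
`8 * d + 4`. -/
def potential (v : Fin n → Fin d → Fin 2) (y : V n d) : V n d → ℕ
  | .l => min (wtE n d v .l y) (8 * d + 4 + wtE n d v .r y)
  | .r => min (wtE n d v .r y) (8 * d + 4 + wtE n d v .l y)
  | z => if z = y then 0 else
      min (wtE n d v z .l + wtE n d v .l y) (wtE n d v z .r + wtE n d v .r y)

lemma potential_of_not_isHub (y : V n d) {z : V n d} (hz : ¬ z.IsHub) :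
    potential v y z =
      if z = y then 0 else
        min (wtE n d v z .l + wtE n d v .l y) (wtE n d v z .r + wtE n d v .r y) := by
  cases z <;> simp_all [V.IsHub, potential]

lemma potential_le_wtE_add {y a b : V n d} (hy : ¬ y.IsHub) (hab : (G n d v).Adj a b) :
    potential v y a ≤ wtE n d v a b + potential v y b := by
  have bounds (z : V n d) (hz : ¬ z.IsHub) :
      8 * d + 4 ≤ wtE n d v z .l + wtE n d v z .r ∧
        wtE n d v z .l ≤ 8 * d + 1 ∧ wtE n d v z .r ≤ 8 * d + 1 ∧
        wtE n d v .l z = wtE n d v z .l ∧ wtE n d v .r z = wtE n d v z .r :=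
    ⟨wtE_l_add_wtE_r hz, wtE_le hz (.inl rfl), wtE_le hz (.inr rfl),
      wtE_comm _ _, wtE_comm _ _⟩
  by_cases ha : a.IsHub
  · have hb : ¬ b.IsHub := G_adj_iff.1 hab |>.1 ha
    have := bounds b hb
    rw [potential_of_not_isHub y hb]
    rcases ha with rfl | rfl <;> split_ifs with hby <;>
      (try subst hby) <;> simp only [potential] <;> omega
  · have hb : b.IsHub := not_not.1 <| mt (G_adj_iff.1 hab).2 ha
    have := bounds a ha
    rw [potential_of_not_isHub y ha]
    rcases hb with rfl | rfl <;> split_ifs with hay <;>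
      (try subst hay) <;> simp only [potential] <;> omega

lemma potential_le_wWeight {x y : V n d} (hy : ¬ y.IsHub) (p : (G n d v).Walk x y) :
    potential v y x ≤ wWeight p := by
  simpa [wWeight, potential_of_not_isHub y hy] using
    p.le_sum_darts_add_of_potential _ _ fun _ _ => potential_le_wtE_add hy

lemma exists_isPath_wWeight_eq {x y h : V n d} (hx : ¬ x.IsHub) (hy : ¬ y.IsHub) (hxy : x ≠ y)
    (hh : h.IsHub) :
    ∃ p : (G n d v).Walk x y, p.IsPath ∧ wWeight p = wtE n d v x h + wtE n d v h y := by
  have hxh : (G n d v).Adj x h := G_adj_iff.2 (iff_of_false hx (not_not.2 hh))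
  have hhy : (G n d v).Adj h y := G_adj_iff.2 (iff_of_true hh hy)
  refine ⟨.cons hxh (.cons hhy .nil), ?_, by simp [wWeight]⟩
  simp [SimpleGraph.Walk.cons_isPath_iff, hxy, hhy.ne, hxh.ne]

theorem dist_eq_two_edge_path_general (n d : ℕ)
    (v : Fin n → Fin d → Fin 2) (a b : Fin n) (hab : a ≠ b)
    (x y : V n d) (hx : inS n d a x) (hy : inS n d b y) :
    dist n d v x y =
      min (wtE n d v x V.l + wtE n d v V.l y) (wtE n d v x V.r + wtE n d v V.r y) := by
  have hxy : x ≠ y := by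
    rcases hx with ⟨j, rfl⟩ | ⟨j, rfl⟩ <;> rcases hy with ⟨j', rfl⟩ | ⟨j', rfl⟩ <;> simp [hab]
  obtain ⟨pl, hpl, hwl⟩ :=
    exists_isPath_wWeight_eq (v := v) hx.not_isHub hy.not_isHub hxy (.inl rfl)
  obtain ⟨pr, hpr, hwr⟩ :=
    exists_isPath_wWeight_eq (v := v) hx.not_isHub hy.not_isHub hxy (.inr rfl)
  refine le_antisymm (le_min (Nat.sInf_le ⟨pl, hpl, hwl⟩) (Nat.sInf_le ⟨pr, hpr, hwr⟩)) ?_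
  refine le_csInf ⟨_, pl, hpl, hwl⟩ ?_
  rintro _ ⟨p, -, rfl⟩
  simpa [potential_of_not_isHub y hx.not_isHub, hxy] using
    potential_le_wWeight hy.not_isHub p

/-- For `a ≠ b` and `x ∈ S_a`, `y ∈ S_b`, the distance is realized by a two-edge path
through `ℓ` or through `r`. -/
theorem dist_eq_two_edge_path (n d : ℕ) (hn : 2 ≤ n) (hd : 1 ≤ d)
    (v : Fin n → Fin d → Fin 2) (a b : Fin n) (hab : a ≠ b)
    (x y : V n d) (hx : inS n d a x) (hy : inS n d b y) :
    dist n d v x y =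
      min (wtE n d v x V.l + wtE n d v V.l y) (wtE n d v x V.r + wtE n d v V.r y) :=
  dist_eq_two_edge_path_general n d v a b hab x y hx hy

end OVGadget
end
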